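/- arXiv:2309.09991 — 4 statements merged into one kernel-verified Lean document; each statement's English description precedes it below -/
import Mathlib

section
/- For every natural number t, Syr(8(4t+2)+5) = Syr(8t+5), i.e., S_5(4t+2) = S_5(t). -/
def Syr (n : ℕ) : ℕ := ordCompl[2] (3 * n + 1)

theorem stmt_6 : ∀ t : ℕ, Syr (8 * (4 * t + 2) + 5) = Syr (8 * t + 5) := by
  intro t
  unfold Syr
  have h1 : 3 * (8 * (4 * t + 2) + 5) + 1 = 32 * (3 * t + 2) := by ring
  have h2 : 3 * (8 * t + 5) + 1 = 8 * (3 * t + 2) := by ring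
  rw [h1, h2, Nat.ordCompl_mul, Nat.ordCompl_mul]
  norm_num
  left
  rw [show (32:ℕ) = 2^5 by norm_num, show (8:ℕ) = 2^3 by norm_num, Nat.Prime.factorization_pow Nat.prime_two, Nat.Prime.factorization_pow Nat.prime_two]
  simp
end

section
/- For every natural number t and every natural number p, Syr(8·Q^p(t)+5) = Syr(8t+5), where Q(t) = 4t+2. -/
lemma ordCompl_four_mul (n : ℕ) (hn : n ≠ 0) : ordCompl[2] (4 * n) = ordCompl[2] n := by
  have h4 : (4:ℕ) = 2^2 := rfl
  rw [Nat.factorization_mul (by norm_num) hn]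
  simp only [Finsupp.coe_add, Pi.add_apply]
  rw [h4, Nat.Prime.factorization_pow Nat.prime_two]
  simp only [pow_add]
  norm_num
  rw [Nat.mul_div_mul_left _ _ (by norm_num : (0:ℕ) < 4)]

theorem stmt_11 : ∀ (t p : ℕ),
    Syr (8 * ((fun t : ℕ => 4 * t + 2)^[p] t) + 5) = Syr (8 * t + 5) := by
  intro t p
  induction p with
  | zero => rfl
  | succ p ih =>
    rw [Function.iterate_succ_apply']
    set m := (fun t : ℕ => 4 * t + 2)^[p] t with hm
    have : 3 * (8 * (4 * m + 2) + 5) + 1 = 4 * (3 * (8 * m + 5) + 1) := by ring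
    unfold Syr
    rw [this, ordCompl_four_mul _ (by positivity)]
    exact ih
end

section
/- Define I_1(p,q) = V^p(8q+1) and I_5(p,q) = V^p(4q+3) with V(m) = 4m+1. Then the two families {I_1(p,q) : p,q ∈ ℕ} and {I_5(p,q) : p,q ∈ ℕ} are disjoint and their union equals the set of all positive odd integers. -/
private lemma aux_odd17 (p m : ℕ) (h : Odd m) :
    Odd ((fun m : ℕ => 4 * m + 1)^[p] m) := by
  induction p with
  | zero => exact h
  | succ n ih =>
    rw [Function.iterate_succ_apply']
    obtain ⟨k, hk⟩ := ih
    exact ⟨4 * k + 2, by omega⟩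

private lemma aux_disj17 : ∀ n : ℕ,
    ¬ ((∃ p q, n = (fun m : ℕ => 4 * m + 1)^[p] (8 * q + 1)) ∧
       (∃ p q, n = (fun m : ℕ => 4 * m + 1)^[p] (4 * q + 3))) := by
  intro n
  induction n using Nat.strong_induction_on with
  | _ n ih =>
    rintro ⟨⟨p, q, h1⟩, ⟨r, s, h2⟩⟩
    match p, r with
    | 0, 0 => simp at h1 h2; omega
    | 0, r + 1 =>
      rw [Function.iterate_succ_apply'] at h2
      obtain ⟨t, ht⟩ := aux_odd17 r (4 * s + 3) ⟨2 * s + 1, by ring⟩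
      simp at h1 h2
      omega
    | p + 1, 0 =>
      rw [Function.iterate_succ_apply'] at h1
      obtain ⟨t, ht⟩ := aux_odd17 p (8 * q + 1) ⟨4 * q, by ring⟩
      simp at h1 h2
      omega
    | p + 1, r + 1 =>
      rw [Function.iterate_succ_apply'] at h1 h2
      set a := (fun m : ℕ => 4 * m + 1)^[p] (8 * q + 1) with ha
      set b := (fun m : ℕ => 4 * m + 1)^[r] (4 * s + 3) with hb
      have h1' : n = 4 * a + 1 := h1
      have h2' : n = 4 * b + 1 := h2
      have hab : a = b := by omega
      have : a < n := by omega
      exact ih a this ⟨⟨p, q, ha⟩, ⟨r, s, by rw [hab]⟩⟩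

private lemma aux_mem17 : ∀ n : ℕ, 0 < n → Odd n →
    (∃ p q, n = (fun m : ℕ => 4 * m + 1)^[p] (8 * q + 1)) ∨
    (∃ p q, n = (fun m : ℕ => 4 * m + 1)^[p] (4 * q + 3)) := by
  intro n
  induction n using Nat.strong_induction_on with
  | _ n ih =>
    intro hn hodd
    obtain ⟨k, hk⟩ := hodd
    rcases Nat.even_or_odd k with ⟨j, hj⟩ | ⟨j, hj⟩
    · -- n = 4j+1
      rcases Nat.even_or_odd j with ⟨i, hi⟩ | ⟨i, hi⟩
      · -- n = 8i+1
        left; exact ⟨0, i, by simp; omega⟩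
      · -- j odd, j < n, recurse
        have hjlt : j < n := by omega
        have hjpos : 0 < j := by omega
        rcases ih j hjlt hjpos ⟨i, hi⟩ with ⟨p, q, h⟩ | ⟨p, q, h⟩
        · left; exact ⟨p + 1, q, by rw [Function.iterate_succ_apply']; omega⟩
        · right; exact ⟨p + 1, q, by rw [Function.iterate_succ_apply']; omega⟩
    · -- n = 4j+3
      right; exact ⟨0, j, by simp; omega⟩

theorem stmt_17 :
    Disjoint {n : ℕ | ∃ p q, n = (fun m : ℕ => 4 * m + 1)^[p] (8 * q + 1)}
      {n : ℕ | ∃ p q, n = (fun m : ℕ => 4 * m + 1)^[p] (4 * q + 3)} ∧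
    ({n : ℕ | ∃ p q, n = (fun m : ℕ => 4 * m + 1)^[p] (8 * q + 1)} ∪
      {n : ℕ | ∃ p q, n = (fun m : ℕ => 4 * m + 1)^[p] (4 * q + 3)}
      = {n : ℕ | 0 < n ∧ Odd n}) := by
  constructor
  · rw [Set.disjoint_left]
    intro n h1 h2
    exact aux_disj17 n ⟨h1, h2⟩
  · ext n
    simp only [Set.mem_union, Set.mem_setOf_eq]
    constructor
    · rintro (⟨p, q, h⟩ | ⟨p, q, h⟩)
      · subst h
        obtain ⟨t, ht⟩ := aux_odd17 p (8 * q + 1) ⟨4 * q, by ring⟩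
        exact ⟨by omega, ⟨t, ht⟩⟩
      · subst h
        obtain ⟨t, ht⟩ := aux_odd17 p (4 * q + 3) ⟨2 * q + 1, by ring⟩
        exact ⟨by omega, ⟨t, ht⟩⟩
    · rintro ⟨hpos, hodd⟩
      exact aux_mem17 n hpos hodd
end

section
/- With I_1(p,q) = V^p(8q+1) and I_5(p,q) = V^p(4q+3), V(m) = 4m+1, the union of {I_1(p,q) : p ≥ 1, q ∈ ℕ} and {I_5(p,q) : p ≥ 1, q ∈ ℕ} equals the residue class {8t+5 : t ∈ ℕ}. -/
private lemma aux18 (k n : ℕ) (h : n % 8 = 5) :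
    ((fun m : ℕ => 4 * m + 1)^[k] n) % 8 = 5 := by
  induction k with
  | zero => simpa
  | succ k ih =>
    rw [Function.iterate_succ_apply']
    omega

theorem stmt_18 :
    {n : ℕ | ∃ p, 1 ≤ p ∧ ∃ q, n = (fun m : ℕ => 4 * m + 1)^[p] (8 * q + 1)} ∪
      {n : ℕ | ∃ p, 1 ≤ p ∧ ∃ q, n = (fun m : ℕ => 4 * m + 1)^[p] (4 * q + 3)}
      = {n : ℕ | ∃ t, n = 8 * t + 5} := by
  ext n
  simp only [Set.mem_union, Set.mem_setOf_eq]
  constructor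
  · rintro (⟨p, hp, q, rfl⟩ | ⟨p, hp, q, rfl⟩)
    · obtain ⟨k, rfl⟩ : ∃ k, p = k + 1 := ⟨p - 1, by omega⟩
      rw [Function.iterate_succ_apply]
      have := aux18 k (4 * (8 * q + 1) + 1) (by omega)
      exact ⟨((fun m : ℕ => 4 * m + 1)^[k] (4 * (8 * q + 1) + 1)) / 8, by omega⟩
    · obtain ⟨k, rfl⟩ : ∃ k, p = k + 1 := ⟨p - 1, by omega⟩
      rw [Function.iterate_succ_apply]
      have := aux18 k (4 * (4 * q + 3) + 1) (by omega)
      exact ⟨((fun m : ℕ => 4 * m + 1)^[k] (4 * (4 * q + 3) + 1)) / 8, by omega⟩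
  · rintro ⟨t, rfl⟩
    induction t using Nat.strong_induction_on with
    | _ t ih =>
      obtain ⟨s, hs⟩ : ∃ s, t = 4 * s ∨ t = 4 * s + 1 ∨ t = 4 * s + 2 ∨ t = 4 * s + 3 :=
        ⟨t / 4, by omega⟩
      rcases hs with rfl | rfl | rfl | rfl
      · exact Or.inl ⟨1, le_refl _, s, by simp; ring⟩
      · exact Or.inr ⟨1, le_refl _, 2 * s, by simp; ring⟩
      · rcases ih s (by omega) with ⟨p, hp, q, h⟩ | ⟨p, hp, q, h⟩
        · refine Or.inl ⟨p + 1, by omega, q, ?_⟩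
          rw [Function.iterate_succ_apply']
          omega
        · refine Or.inr ⟨p + 1, by omega, q, ?_⟩
          rw [Function.iterate_succ_apply']
          omega
      · exact Or.inr ⟨1, le_refl _, 2 * s + 1, by simp; ring⟩
end
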